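/- arXiv:2005.13715 — 2 statements merged into one kernel-verified Lean document; each statement's English description precedes it below -/
import Mathlib

section
/- Let p be a prime number, w any weight on 𝔽_p, and C ⊆ 𝔽_p^n a code with |C| ≥ 2. Then C is diameter perfect (with respect to the weighted chain distance d_w) if and only if C is MDS; that is, in (𝔽_p^n, d_w) the only diameter perfect codes are the MDS codes. -/
set_option linter.unusedSectionVars false

open scoped Classical

noncomputable section

variable {F : Type*} [Field F] [Fintype F]

def IsWeight (w : F → ℕ) : Prop :=
  (∀ a : F, w a = 0 ↔ a = 0) ∧ (∀ a : F, w (-a) = w a) ∧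
    (∀ a b : F, w (a + b) ≤ w a + w b)

def Mw (w : F → ℕ) : ℕ := Finset.univ.sup w

def mw (w : F → ℕ) : ℕ := sInf {s | ∃ a : F, a ≠ 0 ∧ w a = s}

def rho {n : ℕ} (u : Fin n → F) : ℕ :=
  (Finset.univ.filter fun j => u j ≠ 0).sup fun j => (j : ℕ) + 1

lemma rho_le {n : ℕ} (u : Fin n → F) : rho u ≤ n :=
  Finset.sup_le fun j _ => j.isLt

def chainWeight {n : ℕ} (w : F → ℕ) (u : Fin n → F) : ℕ :=
  if h : rho u = 0 then 0
  else w (u ⟨rho u - 1,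
        lt_of_lt_of_le (Nat.sub_lt (Nat.pos_of_ne_zero h) Nat.one_pos) (rho_le u)⟩)
      + (rho u - 1) * Mw w

def dChain {n : ℕ} (w : F → ℕ) (u v : Fin n → F) : ℕ := chainWeight w (u - v)

def ballW {n : ℕ} (w : F → ℕ) (x : Fin n → F) (r : ℕ) : Finset (Fin n → F) :=
  Finset.univ.filter fun v => dChain w x v ≤ r

def diamW {n : ℕ} (w : F → ℕ) (A : Finset (Fin n → F)) : ℕ :=
  (A ×ˢ A).sup fun p => dChain w p.1 p.2

def AstarW (w : F → ℕ) (n D : ℕ) : ℕ :=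
  Finset.univ.sup fun A : Finset (Fin n → F) => if diamW w A ≤ D then A.card else 0

def winv (w : F → ℕ) (S : ℕ) : Finset F :=
  Finset.univ.filter fun a => a ≠ 0 ∧ w a ≤ S

def dP {n : ℕ} (C : Finset (Fin n → F)) : ℕ :=
  sInf {s | ∃ x ∈ C, ∃ y ∈ C, x ≠ y ∧ rho (x - y) = s}

def dW {n : ℕ} (w : F → ℕ) (C : Finset (Fin n → F)) : ℕ :=
  sInf {s | ∃ x ∈ C, ∃ y ∈ C, x ≠ y ∧ dChain w x y = s}

def floorW (w : F → ℕ) (n D : ℕ) : ℕ :=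
  (Finset.univ.filter fun u : Fin n → F => chainWeight w u < D).sup (chainWeight w)

def nonArch (w : F → ℕ) : Prop := ∀ a b : F, w (a + b) ≤ max (w a) (w b)

def Sw (w : F → ℕ) : ℕ :=
  if nonArch w then Mw w
  else sInf {s | ∃ a b : F, max (w a) (w b) < w (a - b) ∧ max (w a) (w b) = s}

def WwCond (w : F → ℕ) (S : ℕ) (K : Finset F) : Prop :=
  (∀ a ∈ K, Sw w ≤ w a ∧ w a ≤ S) ∧
  (∀ a ∈ K, ∀ b : F, w b ≤ Sw w - 1 → w (a - b) ≤ S) ∧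
  (∀ a ∈ K, ∀ b ∈ K, w (a - b) ≤ S)

def WwCard (w : F → ℕ) (S : ℕ) : ℕ :=
  Finset.univ.sup fun K : Finset F => if WwCond w S K then K.card else 0

def idealOf {n : ℕ} (P : PartialOrder (Fin n)) (u : Fin n → F) : Finset (Fin n) :=
  Finset.univ.filter fun j => ∃ i : Fin n, u i ≠ 0 ∧ P.le j i

def maxOf {n : ℕ} (P : PartialOrder (Fin n)) (u : Fin n → F) : Finset (Fin n) :=
  (idealOf P u).filter fun j => ∀ k ∈ idealOf P u, P.le j k → j = k

def posetWeight {n : ℕ} (P : PartialOrder (Fin n)) (w : F → ℕ) (u : Fin n → F) : ℕ :=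
  (∑ i ∈ maxOf P u, w (u i)) + Mw w * ((idealOf P u) \ (maxOf P u)).card

def dPoset {n : ℕ} (P : PartialOrder (Fin n)) (w : F → ℕ) (u v : Fin n → F) : ℕ :=
  posetWeight P w (u - v)

def ballP {n : ℕ} (P : PartialOrder (Fin n)) (w : F → ℕ) (x : Fin n → F) (r : ℕ) :
    Finset (Fin n → F) :=
  Finset.univ.filter fun v => dPoset P w x v ≤ r

def diamP {n : ℕ} (P : PartialOrder (Fin n)) (w : F → ℕ) (A : Finset (Fin n → F)) : ℕ :=
  (A ×ˢ A).sup fun p => dPoset P w p.1 p.2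

end
section MyHelpers
variable {F : Type*} [Field F] [Fintype F] {n : ℕ}

lemma my_le_rho {u : Fin n → F} {j : Fin n} (h : u j ≠ 0) : (j : ℕ) + 1 ≤ rho u :=
  Finset.le_sup (f := fun j : Fin n => (j : ℕ) + 1)
    (Finset.mem_filter.mpr ⟨Finset.mem_univ j, h⟩)

lemma my_rho_eq_zero_iff (u : Fin n → F) : rho u = 0 ↔ u = 0 := by
  constructor
  · intro h
    funext j
    by_contra hj
    have := my_le_rho hj
    omega
  · intro h
    subst h
    simp [rho]

lemma my_eq_zero_of_rho_le {u : Fin n → F} {j : Fin n} (h : rho u ≤ (j : ℕ)) : u j = 0 := by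
  by_contra hj
  have := my_le_rho hj
  omega

lemma my_rho_spec {u : Fin n → F} (h : u ≠ 0) : ∃ j : Fin n, u j ≠ 0 ∧ (j : ℕ) + 1 = rho u := by
  have hne : (Finset.univ.filter fun j => u j ≠ 0).Nonempty := by
    by_contra hcon
    apply h
    funext j
    by_contra hj
    exact hcon ⟨j, Finset.mem_filter.mpr ⟨Finset.mem_univ j, hj⟩⟩
  obtain ⟨j, hj, hje⟩ := Finset.exists_mem_eq_sup _ hne (fun j : Fin n => (j : ℕ) + 1)
  exact ⟨j, (Finset.mem_filter.mp hj).2, hje.symm⟩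

lemma my_w_le_Mw (w : F → ℕ) (a : F) : w a ≤ Mw w := Finset.le_sup (Finset.mem_univ a)

lemma my_one_le_w {w : F → ℕ} (hw : IsWeight w) {a : F} (ha : a ≠ 0) : 1 ≤ w a := by
  have h := (hw.1 a)
  rcases Nat.eq_zero_or_pos (w a) with h0 | h1
  · exact absurd (h.mp h0) ha
  · exact h1

lemma my_chainWeight_eq (w : F → ℕ) {u : Fin n → F} {k : ℕ} (hk : k < n)
    (hr : rho u = k + 1) : chainWeight w u = w (u ⟨k, hk⟩) + k * Mw w := by
  unfold chainWeight
  rw [dif_neg (by omega)]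
  have h1 : ∀ p : rho u - 1 < n, (⟨rho u - 1, p⟩ : Fin n) = ⟨k, hk⟩ :=
    fun p => Fin.ext (show rho u - 1 = k by omega)
  rw [h1]
  simp [hr]

lemma my_chainWeight_le (w : F → ℕ) (u : Fin n → F) :
    chainWeight w u ≤ rho u * Mw w := by
  by_cases h : u = 0
  · subst h
    simp [chainWeight, rho]
  · have hr : rho u ≠ 0 := fun hc => h ((my_rho_eq_zero_iff u).mp hc)
    have hk : rho u - 1 < n := lt_of_lt_of_le (by omega) (rho_le u)
    have := my_chainWeight_eq w hk (show rho u = (rho u - 1) + 1 by omega)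
    rw [this]
    have h2 := my_w_le_Mw w (u ⟨rho u - 1, hk⟩)
    have h3 : rho u * Mw w = Mw w + (rho u - 1) * Mw w := by
      conv_lhs => rw [show rho u = (rho u - 1) + 1 by omega]
      rw [Nat.succ_mul]
      omega
    omega

lemma my_chainWeight_lb {w : F → ℕ} (hw : IsWeight w) {u : Fin n → F} (h : u ≠ 0) :
    (rho u - 1) * Mw w + 1 ≤ chainWeight w u := by
  have hr : rho u ≠ 0 := fun hc => h ((my_rho_eq_zero_iff u).mp hc)
  have hk : rho u - 1 < n := lt_of_lt_of_le (by omega) (rho_le u)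
  rw [my_chainWeight_eq w hk (show rho u = (rho u - 1) + 1 by omega)]
  have htop : u ⟨rho u - 1, hk⟩ ≠ 0 := by
    obtain ⟨j, hj, hje⟩ := my_rho_spec h
    have : j = (⟨rho u - 1, hk⟩ : Fin n) := Fin.ext (show (j : ℕ) = rho u - 1 by omega)
    rwa [← this]
  have := my_one_le_w hw htop
  omega

lemma my_chainWeight_mono (w : F → ℕ) {u : Fin n → F} {k : ℕ} (h : rho u ≤ k) :
    chainWeight w u ≤ k * Mw w :=
  le_trans (my_chainWeight_le w u) (Nat.mul_le_mul_right _ h)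

lemma my_rho_monomial {a : F} (ha : a ≠ 0) {k : ℕ} (hk : k < n) :
    rho (fun j : Fin n => if j = (⟨k, hk⟩ : Fin n) then a else 0) = k + 1 := by
  apply le_antisymm
  · apply Finset.sup_le
    intro j hj
    simp only [Finset.mem_filter, Finset.mem_univ, true_and] at hj
    by_cases hjk : j = (⟨k, hk⟩ : Fin n)
    · subst hjk; simp
    · simp [hjk] at hj
  · exact my_le_rho (j := (⟨k, hk⟩ : Fin n)) (by simp [ha])

lemma my_chainWeight_monomial (w : F → ℕ) {a : F} (ha : a ≠ 0) {k : ℕ} (hk : k < n) :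
    chainWeight w (fun j : Fin n => if j = (⟨k, hk⟩ : Fin n) then a else 0)
      = w a + k * Mw w := by
  rw [my_chainWeight_eq w hk (my_rho_monomial ha hk)]
  simp

end MyHelpers
theorem stmt17 {F : Type*} [Field F] [Fintype F] {n : ℕ} (hn : 1 ≤ n)
    (hp : (Fintype.card F).Prime)
    (w : F → ℕ) (hw : IsWeight w) (C : Finset (Fin n → F)) (hC : 2 ≤ C.card) :
    AstarW w n (floorW w n (dW w C)) * C.card = Fintype.card F ^ n ↔
      C.card = Fintype.card F ^ (n - dP C + 1) := by
  classical
  have h2q : 2 ≤ Fintype.card F := hp.two_le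
  -- an element of maximal weight
  have hMa : ∃ a : F, a ≠ 0 ∧ w a = Mw w := by
    obtain ⟨a, _, hae⟩ := Finset.exists_mem_eq_sup (Finset.univ : Finset F)
      Finset.univ_nonempty w
    have hae2 : Mw w = w a := hae
    obtain ⟨b, hb⟩ := exists_ne (0 : F)
    have hMq : 1 ≤ Mw w := le_trans (my_one_le_w hw hb) (my_w_le_Mw w b)
    refine ⟨a, ?_, hae2.symm⟩
    intro h0
    rw [h0] at hae2
    have := (hw.1 (0:F)).mpr rfl
    omega
  have hM1 : 1 ≤ Mw w := by
    obtain ⟨a, ha, hae⟩ := hMa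
    exact hae ▸ my_one_le_w hw ha
  -- a pair of distinct codewords
  obtain ⟨x0, hx0, y0, hy0, hxy0⟩ := Finset.one_lt_card.mp hC
  -- dP basics
  have hdP_ne : {s | ∃ x ∈ C, ∃ y ∈ C, x ≠ y ∧ rho (x - y) = s}.Nonempty :=
    ⟨rho (x0 - y0), x0, hx0, y0, hy0, hxy0, rfl⟩
  obtain ⟨x1, hx1, y1, hy1, hxy1, hrho1'⟩ := Nat.sInf_mem hdP_ne
  have hrho1 : rho (x1 - y1) = dP C := hrho1'
  have hdle : ∀ x ∈ C, ∀ y ∈ C, x ≠ y → dP C ≤ rho (x - y) := by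
    intro x hx y hy hxy
    exact Nat.sInf_le ⟨x, hx, y, hy, hxy, rfl⟩
  have hd1 : 1 ≤ dP C := by
    have hne : x1 - y1 ≠ 0 := sub_ne_zero.mpr hxy1
    have : rho (x1 - y1) ≠ 0 := fun hc => hne ((my_rho_eq_zero_iff _).mp hc)
    omega
  have hdn : dP C ≤ n := hrho1 ▸ rho_le (x1 - y1)
  -- dW basics
  have hdW_ne : {s | ∃ x ∈ C, ∃ y ∈ C, x ≠ y ∧ dChain w x y = s}.Nonempty :=
    ⟨dChain w x0 y0, x0, hx0, y0, hy0, hxy0, rfl⟩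
  obtain ⟨x2, hx2, y2, hy2, hxy2, hch2'⟩ := Nat.sInf_mem hdW_ne
  have hch2 : dChain w x2 y2 = dW w C := hch2'
  have hdwle : ∀ x ∈ C, ∀ y ∈ C, x ≠ y → dW w C ≤ dChain w x y := by
    intro x hx y hy hxy
    exact Nat.sInf_le ⟨x, hx, y, hy, hxy, rfl⟩
  have hdW_lb : (dP C - 1) * Mw w + 1 ≤ dW w C := by
    rw [← hch2]
    have hne : x2 - y2 ≠ 0 := sub_ne_zero.mpr hxy2
    have h1 := my_chainWeight_lb hw hne
    have h2 := hdle x2 hx2 y2 hy2 hxy2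
    have h3 : (dP C - 1) * Mw w ≤ (rho (x2 - y2) - 1) * Mw w :=
      Nat.mul_le_mul_right _ (by omega)
    unfold dChain
    omega
  have hdW_ub : dW w C ≤ dP C * Mw w := by
    have h1 := hdwle x1 hx1 y1 hy1 hxy1
    have h2 : dChain w x1 y1 ≤ dP C * Mw w :=
      my_chainWeight_mono w (le_of_eq hrho1)
    omega
  -- floorW basics
  have hfloor_lt : floorW w n (dW w C) < dW w C := by
    unfold floorW
    have h0 : (⊥ : ℕ) < dW w C := lt_of_lt_of_le (Nat.succ_pos _) hdW_lb
    rw [Finset.sup_lt_iff h0]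
    intro u hu
    exact (Finset.mem_filter.mp hu).2
  have hfloor_lb : (dP C - 1) * Mw w ≤ floorW w n (dW w C) := by
    rcases Nat.eq_or_lt_of_le hd1 with h1 | h2
    · simp [← h1]
    · obtain ⟨a, ha, haM⟩ := hMa
      have hk : dP C - 2 < n := by omega
      have hcw := my_chainWeight_monomial w ha hk
      have hval : w a + (dP C - 2) * Mw w = (dP C - 1) * Mw w := by
        rw [haM]
        conv_rhs => rw [show dP C - 1 = (dP C - 2) + 1 by omega]
        rw [Nat.succ_mul]
        omega
      unfold floorW
      have hmem : (fun j : Fin n => if j = (⟨dP C - 2, hk⟩ : Fin n) then a else 0) ∈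
          Finset.univ.filter fun u : Fin n → F => chainWeight w u < dW w C := by
        rw [Finset.mem_filter]
        refine ⟨Finset.mem_univ _, ?_⟩
        rw [hcw, hval]
        have h3 : (dP C - 1) * Mw w < (dP C - 1) * Mw w + 1 := Nat.lt_succ_self _
        omega
      have := Finset.le_sup (f := chainWeight w) hmem
      rw [hcw, hval] at this
      exact this
  -- Singleton bound
  have hsingleton : C.card ≤ Fintype.card F ^ (n - dP C + 1) := by
    have hinj : Set.InjOn (fun x : Fin n → F => fun i : Fin (n - dP C + 1) =>
        x ⟨dP C - 1 + i.1, by have := i.2; omega⟩) ↑C := by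
      intro x hx y hy hxy
      by_contra hne
      have hle := hdle x hx y hy hne
      have hnz : x - y ≠ 0 := sub_ne_zero.mpr hne
      obtain ⟨j, hj, hje⟩ := my_rho_spec hnz
      have hji : (j : ℕ) - (dP C - 1) < n - dP C + 1 := by
        have := j.2
        omega
      have h5 := congrFun hxy ⟨(j : ℕ) - (dP C - 1), hji⟩
      simp only at h5
      have hidx : (⟨dP C - 1 + ((j : ℕ) - (dP C - 1)), by have := j.2; omega⟩ : Fin n) = j :=
        Fin.ext (by simp only; omega)
      rw [hidx] at h5
      exact hj (sub_eq_zero.mpr h5)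
    have hcard := Finset.card_le_card_of_injOn _ (fun x _ => Finset.mem_univ _) hinj
    calc C.card ≤ (Finset.univ : Finset (Fin (n - dP C + 1) → F)).card := hcard
      _ = Fintype.card F ^ (n - dP C + 1) := by
          rw [Finset.card_univ, Fintype.card_fun, Fintype.card_fin]
  -- code-anticode bound
  have hca : ∀ A : Finset (Fin n → F), diamW w A ≤ floorW w n (dW w C) →
      A.card * C.card ≤ Fintype.card F ^ n := by
    intro A hA
    have hkey : Set.InjOn (fun p : (Fin n → F) × (Fin n → F) => p.1 + p.2) ↑(A ×ˢ C) := by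
      intro p hp q hq hpq
      simp only [Finset.coe_product, Set.mem_prod, Finset.mem_coe] at hp hq
      simp only at hpq
      by_cases hc : p.2 = q.2
      · have h1 : p.1 = q.1 := by
          rw [hc] at hpq
          exact add_right_cancel hpq
        exact Prod.ext h1 hc
      · exfalso
        have hsub : p.2 - q.2 = q.1 - p.1 := by
          rw [sub_eq_sub_iff_add_eq_add, add_comm p.2 p.1, hpq, add_comm q.1 q.2]
        have h1 : dW w C ≤ dChain w p.2 q.2 := hdwle _ hp.2 _ hq.2 hc
        have h2 : dChain w p.2 q.2 = dChain w q.1 p.1 := by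
          unfold dChain
          rw [hsub]
        have hmem : (q.1, p.1) ∈ A ×ˢ A := Finset.mem_product.mpr ⟨hq.1, hp.1⟩
        have h3 : dChain w q.1 p.1 ≤ diamW w A :=
          Finset.le_sup (f := fun p : (Fin n → F) × (Fin n → F) => dChain w p.1 p.2) hmem
        omega
    have hcard := Finset.card_le_card_of_injOn _ (fun x _ => Finset.mem_univ _) hkey
    rw [Finset.card_product] at hcard
    calc A.card * C.card ≤ (Finset.univ : Finset (Fin n → F)).card := hcard
      _ = Fintype.card F ^ n := by
          rw [Finset.card_univ, Fintype.card_fun, Fintype.card_fin]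
  -- anticode lower bound
  have hast_lb : Fintype.card F ^ (dP C - 1) ≤ AstarW w n (floorW w n (dW w C)) := by
    set A0 : Finset (Fin n → F) :=
      Finset.univ.filter (fun u : Fin n → F => ∀ j : Fin n, dP C - 1 ≤ (j : ℕ) → u j = 0)
      with hA0
    have hdiam : diamW w A0 ≤ floorW w n (dW w C) := by
      refine le_trans ?_ hfloor_lb
      unfold diamW
      apply Finset.sup_le
      intro p hp
      rw [Finset.mem_product] at hp
      have h1 := (Finset.mem_filter.mp hp.1).2
      have h2 := (Finset.mem_filter.mp hp.2).2
      have hrho : rho (p.1 - p.2) ≤ dP C - 1 := by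
        apply Finset.sup_le
        intro j hj
        have hj2 := (Finset.mem_filter.mp hj).2
        by_contra hcon
        apply hj2
        rw [Pi.sub_apply, h1 j (by omega), h2 j (by omega), sub_zero]
      exact my_chainWeight_mono w hrho
    have hginj : Function.Injective (fun v : Fin (dP C - 1) → F =>
        (fun j : Fin n => if h : (j : ℕ) < dP C - 1 then v ⟨j.1, h⟩ else 0)) := by
      intro v v' he
      funext i
      have hi : (i : ℕ) < dP C - 1 := i.2
      have hin : (i : ℕ) < n := by omega
      have h5 := congrFun he ⟨i.1, hin⟩
      simp only at h5
      rw [dif_pos hi, dif_pos hi] at h5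
      exact h5
    have himg : Finset.univ.image (fun v : Fin (dP C - 1) → F =>
        (fun j : Fin n => if h : (j : ℕ) < dP C - 1 then v ⟨j.1, h⟩ else 0)) ⊆ A0 := by
      intro u hu
      obtain ⟨v, _, rfl⟩ := Finset.mem_image.mp hu
      refine Finset.mem_filter.mpr ⟨Finset.mem_univ _, ?_⟩
      intro j hj
      exact dif_neg (by omega)
    have hcard0 : Fintype.card F ^ (dP C - 1) ≤ A0.card := by
      calc Fintype.card F ^ (dP C - 1)
          = (Finset.univ : Finset (Fin (dP C - 1) → F)).card := by
            rw [Finset.card_univ, Fintype.card_fun, Fintype.card_fin]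
        _ = (Finset.univ.image (fun v : Fin (dP C - 1) → F =>
              (fun j : Fin n => if h : (j : ℕ) < dP C - 1 then v ⟨j.1, h⟩ else 0))).card :=
            (Finset.card_image_of_injective _ hginj).symm
        _ ≤ A0.card := Finset.card_le_card himg
    have hle : (if diamW w A0 ≤ floorW w n (dW w C) then A0.card else 0) ≤
        AstarW w n (floorW w n (dW w C)) :=
      Finset.le_sup (f := fun A : Finset (Fin n → F) =>
        if diamW w A ≤ floorW w n (dW w C) then A.card else 0) (Finset.mem_univ A0)
    rw [if_pos hdiam] at hle
    omega
  -- anticode strict upper bound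
  have hast_ub : AstarW w n (floorW w n (dW w C)) < Fintype.card F ^ dP C := by
    have hub1 : ∀ A : Finset (Fin n → F), diamW w A ≤ floorW w n (dW w C) →
        A.card < Fintype.card F ^ dP C := by
      intro A hA
      have hdiam_le : ∀ x ∈ A, ∀ y ∈ A, dChain w x y ≤ floorW w n (dW w C) := by
        intro x hx y hy
        have hmem : (x, y) ∈ A ×ˢ A := Finset.mem_product.mpr ⟨hx, hy⟩
        exact le_trans (Finset.le_sup
          (f := fun p : (Fin n → F) × (Fin n → F) => dChain w p.1 p.2) hmem) hA
      have hvan : ∀ x ∈ A, ∀ y ∈ A, ∀ j : Fin n, dP C ≤ (j : ℕ) → (x - y) j = 0 := by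
        intro x hx y hy j hj
        by_cases hxy : x = y
        · subst hxy; simp
        · have h1 := hdiam_le x hx y hy
          have hne : x - y ≠ 0 := sub_ne_zero.mpr hxy
          have h2 := my_chainWeight_lb hw hne
          have hrho : rho (x - y) ≤ dP C := by
            by_contra hcon
            have h3 : dP C * Mw w ≤ (rho (x - y) - 1) * Mw w :=
              Nat.mul_le_mul_right _ (by omega)
            have h4 : dChain w x y = chainWeight w (x - y) := rfl
            omega
          exact my_eq_zero_of_rho_le (le_trans hrho hj)
      have hinj : Set.InjOn (fun x : Fin n → F =>
          fun i : Fin (dP C) => x ⟨i.1, lt_of_lt_of_le i.2 hdn⟩) ↑A := by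
        intro x hx y hy hxy
        funext j
        by_cases hj : (j : ℕ) < dP C
        · have h5 := congrFun hxy ⟨j.1, hj⟩
          exact h5
        · have h6 := hvan x hx y hy j (by omega)
          rw [Pi.sub_apply, sub_eq_zero] at h6
          exact h6
      have hle : A.card ≤ Fintype.card F ^ dP C := by
        have hcard := Finset.card_le_card_of_injOn _ (fun x _ => Finset.mem_univ _) hinj
        calc A.card ≤ (Finset.univ : Finset (Fin (dP C) → F)).card := hcard
          _ = Fintype.card F ^ dP C := by
              rw [Finset.card_univ, Fintype.card_fun, Fintype.card_fin]
      rcases lt_or_eq_of_le hle with h | hAcard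
      · exact h
      · exfalso
        have himg : A.image (fun x : Fin n → F =>
            fun i : Fin (dP C) => x ⟨i.1, lt_of_lt_of_le i.2 hdn⟩) = Finset.univ := by
          apply Finset.eq_univ_of_card
          rw [Finset.card_image_of_injOn hinj, hAcard, Fintype.card_fun, Fintype.card_fin]
        have hAne : A.Nonempty := Finset.card_pos.mp (by rw [hAcard]; positivity)
        obtain ⟨a0, ha0⟩ := hAne
        obtain ⟨a, ha, haM⟩ := hMa
        have hdlt : dP C - 1 < dP C := by omega
        have hdltn : dP C - 1 < n := by omega
        have htmem : Function.update ((fun x : Fin n → F =>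
            fun i : Fin (dP C) => x ⟨i.1, lt_of_lt_of_le i.2 hdn⟩) a0)
            ⟨dP C - 1, hdlt⟩ (a0 ⟨dP C - 1, hdltn⟩ + a) ∈ A.image (fun x : Fin n → F =>
            fun i : Fin (dP C) => x ⟨i.1, lt_of_lt_of_le i.2 hdn⟩) := by
          rw [himg]
          exact Finset.mem_univ _
        obtain ⟨a1, ha1, hra1⟩ := Finset.mem_image.mp htmem
        have htop : (a1 - a0) ⟨dP C - 1, hdltn⟩ = a := by
          have h5 := congrFun hra1 ⟨dP C - 1, hdlt⟩
          rw [Function.update_self] at h5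
          rw [Pi.sub_apply]
          rw [show a1 ⟨dP C - 1, hdltn⟩ = a0 ⟨dP C - 1, hdltn⟩ + a from h5]
          ring
        have hrho_le : rho (a1 - a0) ≤ dP C := by
          apply Finset.sup_le
          intro j hj
          have hj2 := (Finset.mem_filter.mp hj).2
          by_contra hcon
          exact hj2 (hvan a1 ha1 a0 ha0 j (by omega))
        have h6 : (dP C - 1) + 1 ≤ rho (a1 - a0) :=
          my_le_rho (show (a1 - a0) ⟨dP C - 1, hdltn⟩ ≠ 0 by rw [htop]; exact ha)
        have hcw := my_chainWeight_eq w hdltn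
          (show rho (a1 - a0) = (dP C - 1) + 1 by omega)
        rw [htop, haM] at hcw
        have hprod : Mw w + (dP C - 1) * Mw w = dP C * Mw w := by
          conv_rhs => rw [show dP C = (dP C - 1) + 1 by omega]
          rw [Nat.succ_mul]
          omega
        have h7 := hdiam_le a1 ha1 a0 ha0
        have h8 : dChain w a1 a0 = chainWeight w (a1 - a0) := rfl
        omega
    unfold AstarW
    rw [Finset.sup_lt_iff (show (⊥ : ℕ) < Fintype.card F ^ dP C by positivity)]
    intro A _
    by_cases hdiam : diamW w A ≤ floorW w n (dW w C)
    · rw [if_pos hdiam]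
      exact hub1 A hdiam
    · rw [if_neg hdiam]
      positivity
  -- assembly
  constructor
  · intro hperf
    obtain ⟨k, hkn, hcard⟩ := (Nat.dvd_prime_pow hp).mp
      ⟨AstarW w n (floorW w n (dW w C)), by rw [mul_comm]; exact hperf.symm⟩
    have hqpow1 : Fintype.card F ^ (n - dP C + 1) ≥ 1 := Nat.one_le_pow _ _ (by omega)
    have hkle : k ≤ n - dP C + 1 := by
      by_contra hcon
      have : Fintype.card F ^ (n - dP C + 1) < Fintype.card F ^ k :=
        Nat.pow_lt_pow_right (by omega) (by omega)
      omega
    have hknd : k = n - dP C + 1 := by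
      by_contra hcon
      have hk2 : k ≤ n - dP C := by omega
      have hAst : AstarW w n (floorW w n (dW w C)) * Fintype.card F ^ k =
          Fintype.card F ^ (n - k) * Fintype.card F ^ k := by
        rw [← pow_add, show n - k + k = n by omega, ← hcard, hperf]
      have hAe : AstarW w n (floorW w n (dW w C)) = Fintype.card F ^ (n - k) :=
        Nat.eq_of_mul_eq_mul_right (by positivity) hAst
      have : Fintype.card F ^ dP C ≤ Fintype.card F ^ (n - k) :=
        Nat.pow_le_pow_right (by omega) (by omega)
      omega
    rw [hcard, hknd]
  · intro hmds
    have hub : AstarW w n (floorW w n (dW w C)) ≤ Fintype.card F ^ (dP C - 1) := by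
      unfold AstarW
      apply Finset.sup_le
      intro A _
      by_cases hdiam : diamW w A ≤ floorW w n (dW w C)
      · rw [if_pos hdiam]
        have h1 := hca A hdiam
        rw [hmds] at h1
        have h2 : Fintype.card F ^ n =
            Fintype.card F ^ (dP C - 1) * Fintype.card F ^ (n - dP C + 1) := by
          rw [← pow_add]
          congr 1
          omega
        rw [h2] at h1
        exact Nat.le_of_mul_le_mul_right h1 (by positivity)
      · rw [if_neg hdiam]
        positivity
    have heq : AstarW w n (floorW w n (dW w C)) = Fintype.card F ^ (dP C - 1) :=
      le_antisymm hub hast_lb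
    rw [heq, hmds, ← pow_add]
    congr 1
    omega
end

section
/- The weighted chain distance d_w is an ultrametric on 𝔽_q^n, i.e., d_w(x, y) ≤ max{d_w(x, z), d_w(z, y)} for all x, y, z ∈ 𝔽_q^n, if and only if the weight w is non-archimedean, i.e., w(a + b) ≤ max{w(a), w(b)} for all a, b ∈ 𝔽_q. -/
set_option linter.unusedSectionVars false

open scoped Classical

section Aux
variable {F : Type*} [Field F] [Fintype F]

lemma le_rho' {n : ℕ} {u : Fin n → F} {j : Fin n} (h : u j ≠ 0) :
    (j : ℕ) + 1 ≤ rho u := by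
  refine Finset.le_sup (f := fun j : Fin n => (j : ℕ) + 1) ?_
  simp [h]

lemma exists_top' {n : ℕ} {u : Fin n → F} (h : rho u ≠ 0) :
    ∃ j : Fin n, u j ≠ 0 ∧ (j : ℕ) + 1 = rho u := by
  have hne : (Finset.univ.filter fun j => u j ≠ 0).Nonempty := by
    by_contra hc
    rw [Finset.not_nonempty_iff_eq_empty] at hc
    exact h (by simp [rho, hc])
  obtain ⟨j, hj, hje⟩ := Finset.exists_mem_eq_sup _ hne (fun j : Fin n => (j : ℕ) + 1)
  exact ⟨j, (Finset.mem_filter.1 hj).2, hje.symm⟩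

lemma chainWeight_eq' {n : ℕ} (w : F → ℕ) (u : Fin n → F) {j : Fin n}
    (hj : (j : ℕ) + 1 = rho u) :
    chainWeight w u = w (u j) + (j : ℕ) * Mw w := by
  have h0 : rho u ≠ 0 := by omega
  rw [chainWeight, dif_neg h0]
  have hidx : (⟨rho u - 1,
      lt_of_lt_of_le (Nat.sub_lt (Nat.pos_of_ne_zero h0) Nat.one_pos) (rho_le u)⟩ : Fin n) = j := by
    apply Fin.ext; simp; omega
  rw [hidx]
  have : rho u - 1 = (j : ℕ) := by omega
  rw [this]

lemma helper' (w : F → ℕ) (hw : IsWeight w) {n : ℕ} (u v : Fin n → F) {j : Fin n}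
    (hj : (u + v) j ≠ 0) (hje : (j : ℕ) + 1 = rho (u + v))
    (hcase : w (u j + v j) ≤ w (u j)) :
    chainWeight w (u + v) ≤ chainWeight w u := by
  have hMw : ∀ a : F, w a ≤ Mw w := fun a => Finset.le_sup (Finset.mem_univ a)
  have hj' : u j + v j ≠ 0 := by simpa using hj
  have hu : u j ≠ 0 := by
    intro h0
    apply hj'
    have hz : w (u j + v j) = 0 := by
      have := (hw.1 (u j)).2 h0
      omega
    exact (hw.1 _).1 hz
  have hru : (j : ℕ) + 1 ≤ rho u := le_rho' hu
  have hcw : chainWeight w (u + v) = w (u j + v j) + (j : ℕ) * Mw w := by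
    rw [chainWeight_eq' w _ hje]; rfl
  rcases eq_or_lt_of_le hru with heq | hlt
  · have hcu : chainWeight w u = w (u j) + (j : ℕ) * Mw w := chainWeight_eq' w u heq
    omega
  · have h0 : rho u ≠ 0 := by omega
    obtain ⟨k, hk, hke⟩ := exists_top' h0
    have hkj : (j : ℕ) + 1 ≤ (k : ℕ) := by omega
    have hcu : chainWeight w u = w (u k) + (k : ℕ) * Mw w := chainWeight_eq' w u hke
    have hmul : ((j : ℕ) + 1) * Mw w ≤ (k : ℕ) * Mw w := Nat.mul_le_mul_right _ hkj
    have hexp : ((j : ℕ) + 1) * Mw w = Mw w + (j : ℕ) * Mw w := by ring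
    have h1 : w (u j + v j) ≤ Mw w := hMw _
    omega

lemma chainWeight_add_le' (w : F → ℕ) (hw : IsWeight w)
    (hna : ∀ a b : F, w (a + b) ≤ max (w a) (w b)) {n : ℕ} (u v : Fin n → F) :
    chainWeight w (u + v) ≤ max (chainWeight w u) (chainWeight w v) := by
  by_cases h : rho (u + v) = 0
  · simp [chainWeight, h]
  obtain ⟨j, hj, hje⟩ := exists_top' h
  rcases le_max_iff.1 (hna (u j) (v j)) with hc | hc
  · exact le_max_of_le_left (helper' w hw u v hj hje hc)
  · rw [add_comm u v] at hj hje ⊢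
    refine le_max_of_le_right (helper' w hw v u hj hje ?_)
    rwa [add_comm (v j) (u j)]

lemma chainWeight_single {n : ℕ} (hn : 1 ≤ n) (w : F → ℕ) (hw : IsWeight w) (c : F) :
    chainWeight w (fun i : Fin n => if i = ⟨0, hn⟩ then c else 0) = w c := by
  set e : Fin n → F := fun i => if i = ⟨0, hn⟩ then c else 0 with he
  by_cases hc : c = 0
  · have : e = 0 := by funext i; simp [he, hc]
    have hr : rho e = 0 := by simp [rho, this]
    rw [chainWeight, dif_pos hr]
    rw [hc, ((hw.1 (0:F)).2 rfl)]
  · have he0 : e ⟨0, hn⟩ = c := by simp [he]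
    have hr : (((⟨0, hn⟩ : Fin n) : ℕ)) + 1 = rho e := by
      refine le_antisymm ?_ ?_
      · exact le_rho' (by rw [he0]; exact hc)
      · apply Finset.sup_le
        intro i hi
        rcases Finset.mem_filter.1 hi with ⟨-, hi⟩
        have : i = ⟨0, hn⟩ := by
          by_contra hne
          exact hi (by simp [he, hne])
        simp [this]
    rw [chainWeight_eq' w e hr, he0]
    simp

end Aux

theorem stmt18 {F : Type*} [Field F] [Fintype F] {n : ℕ} (hn : 1 ≤ n)
    (w : F → ℕ) (hw : IsWeight w) :
    (∀ x y z : Fin n → F, dChain w x y ≤ max (dChain w x z) (dChain w z y)) ↔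
      (∀ a b : F, w (a + b) ≤ max (w a) (w b)) := by
  constructor
  · intro h a b
    set e : F → (Fin n → F) := fun c i => if i = ⟨0, hn⟩ then c else 0 with he
    have key := h (e (a + b)) 0 (e b)
    have h1 : dChain w (e (a + b)) 0 = w (a + b) := by
      rw [dChain, sub_zero]; exact chainWeight_single hn w hw (a + b)
    have h2 : dChain w (e (a + b)) (e b) = w a := by
      have hsub : e (a + b) - e b = e a := by
        funext i
        by_cases hi : i = ⟨0, hn⟩ <;> simp [he, hi]
      rw [dChain, hsub]; exact chainWeight_single hn w hw a
    have h3 : dChain w (e b) 0 = w b := by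
      rw [dChain, sub_zero]; exact chainWeight_single hn w hw b
    rw [h1, h2, h3] at key
    exact key
  · intro hna x y z
    have hsplit : x - y = (x - z) + (z - y) := by ring
    rw [dChain, hsplit]
    exact chainWeight_add_le' w hw hna _ _
end
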